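/- arXiv:1305.6239 — 2 statements merged into one kernel-verified Lean document; each statement's English description precedes it below -/
import Mathlib

section
/- Let (M,ρ) be a metric space and let μ be a Borel probability measure on M whose support X_μ is compact and which satisfies the (a,b)-standard assumption for some a>0, b>0. For each n let X₁,…,Xₙ be i.i.d. with law μ and X̂ₙ = {X₁,…,Xₙ}. Then there exists a constant C₂ > 0 depending only on a and b such that lim_{n→∞} ℙ( d_H(X_μ, X̂ₙ) ≤ C₂ (log n / n)^{1/b} ) = 1. -/
/-!
Choose `r` with `a r^b = t := 2 log n / n`. A maximal `r`-separated subset `N` of the support is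
an `r`-cover of it; the balls of radius `r / 2` around its points are disjoint and each has mass at
least `t / 2^b`, so `N` has at most `2^b / t` points. If each ball `B(c, r)`, `c ∈ N`, contains a
sample point, then every point of the support is within `2r` of the sample. By the union bound this
fails with probability at most `(2^b / t) (1 - t)^n ≤ 2^b / (2 n log n) → 0`.
-/

open MeasureTheory Metric Filter Set
open scoped ENNReal NNReal

variable {M : Type*} [MetricSpace M]

lemma Metric.IsSeparated.pairwiseDisjoint_ball {ε : ℝ≥0} {C : Set M} (hC : IsSeparated ε C) :
    C.PairwiseDisjoint fun c => ball c (ε / 2) := by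
  intro c hc c' hc' hne
  refine Set.disjoint_left.2 fun x hx hx' => ?_
  have hsep : ε < nndist c c' := by
    simpa only [edist_nndist, ENNReal.coe_lt_coe] using hC hc hc' hne
  rw [← NNReal.coe_lt_coe, coe_nndist] at hsep
  have := dist_triangle_left c c' x
  linarith [mem_ball.1 hx, mem_ball.1 hx']

lemma Metric.IsSeparated.card_mul_le_measure_univ [MeasurableSpace M] [OpensMeasurableSpace M]
    {μ : Measure M} {ε : ℝ≥0} {F : Finset M} (hF : IsSeparated ε (F : Set M)) {δ : ℝ≥0∞}
    (hδ : ∀ c ∈ F, δ ≤ μ (ball c (ε / 2))) : F.card * δ ≤ μ univ :=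
  calc F.card * δ = ∑ _c ∈ F, δ := by rw [Finset.sum_const, nsmul_eq_mul]
    _ ≤ ∑ c ∈ F, μ (ball c (ε / 2)) := Finset.sum_le_sum hδ
    _ = μ (⋃ c ∈ F, ball c (ε / 2)) :=
      (measure_biUnion_finset hF.pairwiseDisjoint_ball fun _ _ => measurableSet_ball).symm
    _ ≤ μ univ := measure_mono (subset_univ _)

lemma Metric.packingNumber_le_of_forall_finset_card_le {ε : ℝ≥0} {A : Set M} {m : ℕ}
    (h : ∀ F : Finset M, ↑F ⊆ A → IsSeparated ε (F : Set M) → F.card ≤ m) :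
    packingNumber ε A ≤ m := by
  refine iSup₂_le fun C hCA => iSup_le fun hC => ?_
  by_contra! hlt
  obtain ⟨t, htC, ht⟩ := Set.exists_subset_encard_eq (Order.add_one_le_of_lt hlt)
  have htfin : t.Finite := Set.finite_of_encard_eq_coe ht
  have hcard := h htfin.toFinset (by simpa using htC.trans hCA) (by simpa using hC.subset htC)
  have := htfin.encard_eq_coe_toFinset_card ▸ ht
  norm_cast at this
  omega

lemma exists_finset_isCover_card_mul_le_measure_univ [MeasurableSpace M] [OpensMeasurableSpace M]
    (μ : Measure M) [IsFiniteMeasure μ] (K : Set M) {ε : ℝ≥0} {δ : ℝ≥0∞} (hδ : δ ≠ 0)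
    (h : ∀ c ∈ K, δ ≤ μ (ball c (ε / 2))) :
    ∃ N : Finset M, ↑N ⊆ K ∧ IsCover ε K N ∧ N.card * δ ≤ μ univ := by
  obtain ⟨m, hm⟩ := ENNReal.exists_nat_gt (ENNReal.div_ne_top (measure_ne_top μ univ) hδ)
  have hpack : packingNumber ε K ≠ ⊤ := by
    refine ne_top_of_le_ne_top (ENat.natCast_ne_top m) <|
      packingNumber_le_of_forall_finset_card_le fun F hFK hFsep => ?_
    have hmass := hFsep.card_mul_le_measure_univ fun c hc => h c (hFK hc)
    rw [← ENNReal.le_div_iff_mul_le (.inl hδ) (.inr (measure_ne_top μ univ))] at hmass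
    exact_mod_cast hmass.trans hm.le
  have hfin : (maximalSeparatedSet ε K).Finite := by
    rw [← Set.encard_ne_top_iff, encard_maximalSeparatedSet hpack]
    exact hpack
  refine ⟨hfin.toFinset, by simpa using maximalSeparatedSet_subset, by
    simpa using isCover_maximalSeparatedSet hpack, ?_⟩
  exact IsSeparated.card_mul_le_measure_univ (by simpa using isSeparated_maximalSeparatedSet)
    fun c hc => h c (maximalSeparatedSet_subset (by simpa using hc))

lemma hausdorffDist_le_two_mul_of_isCover {K S N : Set M} {ε : ℝ≥0} (hSK : S ⊆ K)
    (hN : IsCover ε K N) (hNS : ∀ c ∈ N, ∃ y ∈ S, dist y c < ε) :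
    hausdorffDist K S ≤ 2 * ε := by
  refine hausdorffDist_le_of_mem_dist (by positivity) (fun x hx => ?_)
    fun y hy => ⟨y, hSK hy, by rw [dist_self]; positivity⟩
  obtain ⟨c, hcN, hxc⟩ := mem_iUnion₂.1 (hN.subset_iUnion_closedBall hx)
  obtain ⟨y, hyS, hyc⟩ := hNS c hcN
  refine ⟨y, hyS, ?_⟩
  linarith [dist_triangle_right x y c, mem_closedBall.1 hxc]

lemma measure_pi_two_mul_lt_hausdorffDist_range_le_sum {ι : Type*} [Fintype ι] [MeasurableSpace M]
    [OpensMeasurableSpace M] (μ : Measure M) [SigmaFinite μ] {K : Set M} (hK : μ Kᶜ = 0)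
    {N : Finset M} {ε : ℝ≥0} (hN : IsCover ε K N) :
    Measure.pi (fun _ : ι => μ) {ω | 2 * ε < hausdorffDist K (range ω)} ≤
      ∑ c ∈ N, μ (ball c ε)ᶜ ^ Fintype.card ι := by
  set ν := Measure.pi fun _ : ι => μ
  have hout : ν {ω | ¬ ∀ i, ω i ∈ K} = 0 :=
    ae_iff.1 (Measure.ae_pi_le_pi (eventually_pi fun _ => ae_iff.2 hK))
  have hmiss : ∀ c, ν (univ.pi fun _ => (ball c ε)ᶜ) = μ (ball c ε)ᶜ ^ Fintype.card ι := by
    intro c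
    rw [Measure.pi_pi, Finset.prod_const, Finset.card_univ]
  have hsub : {ω : ι → M | 2 * ε < hausdorffDist K (range ω)} ⊆
      {ω | ¬ ∀ i, ω i ∈ K} ∪ ⋃ c ∈ N, univ.pi fun _ => (ball c ε)ᶜ := by
    intro ω hω
    by_contra hgood
    simp only [mem_union, mem_ofPred_eq, mem_iUnion, Set.mem_pi, mem_univ, mem_compl_iff,
      forall_const, not_or, not_not, not_exists, not_forall] at hgood
    refine (not_le.2 hω) (hausdorffDist_le_two_mul_of_isCover ?_ (by simpa using hN) ?_)
    · rintro _ ⟨i, rfl⟩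
      exact hgood.1 i
    · intro c hc
      obtain ⟨i, hi⟩ := hgood.2 c hc
      exact ⟨ω i, mem_range_self i, hi⟩
  calc ν {ω | 2 * ε < hausdorffDist K (range ω)}
      ≤ ν {ω | ¬ ∀ i, ω i ∈ K} + ν (⋃ c ∈ N, univ.pi fun _ => (ball c ε)ᶜ) :=
        (measure_mono hsub).trans (measure_union_le _ _)
    _ ≤ ∑ c ∈ N, μ (ball c ε)ᶜ ^ Fintype.card ι := by
        rw [hout, zero_add, ← Finset.sum_congr rfl fun c _ => hmiss c]
        exact measure_biUnion_finset_le N _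

section StandardAssumption

variable [MeasurableSpace M]

def StandardAssumption (μ : Measure M) (K : Set M) (a b : ℝ) : Prop :=
  ∀ x ∈ K, ∀ r : ℝ, 0 < r → ENNReal.ofReal (min (a * r ^ b) 1) ≤ μ (ball x r)

variable [OpensMeasurableSpace M] {μ : Measure M} [IsProbabilityMeasure μ] {K : Set M} {a b : ℝ}

lemma StandardAssumption.measure_pi_two_mul_lt_hausdorffDist_range_le
    (h : StandardAssumption μ K a b) (ha : 0 < a) (hb : 0 < b) (hK : μ Kᶜ = 0) {r : ℝ}
    (hr : 0 < r) (hr1 : a * r ^ b ≤ 1) (ι : Type*) [Fintype ι] :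
    Measure.pi (fun _ : ι => μ) {ω | 2 * r < hausdorffDist K (range ω)} ≤
      ENNReal.ofReal (2 ^ b / (a * r ^ b) * (1 - a * r ^ b) ^ Fintype.card ι) := by
  have hstd : ∀ c ∈ K, ENNReal.ofReal (a * r ^ b) ≤ μ (ball c r) := fun c hc => by
    simpa only [min_eq_left hr1] using h c hc r hr
  set t := a * r ^ b
  have ht : 0 < t := by positivity
  have h2b : 0 < (2 : ℝ) ^ b := by positivity
  have hhalf : ∀ c ∈ K, ENNReal.ofReal (t / 2 ^ b) ≤ μ (ball c (r / 2)) := by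
    intro c hc
    have hts : t / 2 ^ b ≤ 1 :=
      (div_le_self ht.le (Real.one_le_rpow one_le_two hb.le)).trans hr1
    have hr2 : a * (r / 2) ^ b = t / 2 ^ b := by
      rw [Real.div_rpow hr.le zero_le_two, mul_div_assoc]
    simpa only [hr2, min_eq_left hts] using h c hc (r / 2) (by positivity)
  have hmiss : ∀ c ∈ K, μ (ball c r)ᶜ ≤ ENNReal.ofReal (1 - t) := by
    intro c hc
    rw [prob_compl_eq_one_sub measurableSet_ball, ENNReal.ofReal_sub _ ht.le, ENNReal.ofReal_one]
    exact tsub_le_tsub_left (hstd c hc) 1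
  lift r to ℝ≥0 using hr.le
  obtain ⟨N, hNK, hN, hcard⟩ := exists_finset_isCover_card_mul_le_measure_univ μ K
    (ENNReal.ofReal_pos.2 (div_pos ht h2b)).ne' hhalf
  have hcard' : (N.card : ℝ) ≤ 2 ^ b / t := by
    rw [measure_univ, ← ENNReal.ofReal_natCast, ← ENNReal.ofReal_mul (Nat.cast_nonneg _),
      ENNReal.ofReal_le_one, mul_div_assoc', div_le_one h2b] at hcard
    rwa [le_div_iff₀ ht]
  calc Measure.pi (fun _ : ι => μ) {ω | 2 * (r : ℝ) < hausdorffDist K (range ω)}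
      ≤ ∑ c ∈ N, μ (ball c r)ᶜ ^ Fintype.card ι :=
        measure_pi_two_mul_lt_hausdorffDist_range_le_sum μ hK hN
    _ ≤ ∑ _c ∈ N, ENNReal.ofReal (1 - t) ^ Fintype.card ι :=
        Finset.sum_le_sum fun c hc => pow_le_pow_left₀ bot_le (hmiss c (hNK hc)) _
    _ = ENNReal.ofReal (N.card * (1 - t) ^ Fintype.card ι) := by
        rw [Finset.sum_const, nsmul_eq_mul, ← ENNReal.ofReal_pow (by linarith),
          ← ENNReal.ofReal_natCast, ← ENNReal.ofReal_mul (Nat.cast_nonneg _)]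
    _ ≤ ENNReal.ofReal (2 ^ b / t * (1 - t) ^ Fintype.card ι) :=
        ENNReal.ofReal_le_ofReal (mul_le_mul_of_nonneg_right hcard' (by bound))

end StandardAssumption

lemma Real.two_mul_log_le_self {x : ℝ} (hx : 0 ≤ x) : 2 * Real.log x ≤ x := by
  rcases hx.eq_or_lt with rfl | hx
  · simp
  have h := Real.log_le_sub_one_of_pos (Real.sqrt_pos.2 hx)
  rw [Real.log_sqrt hx.le] at h
  nlinarith [Real.sq_sqrt hx.le, sq_nonneg (Real.sqrt x - 2)]

lemma one_sub_two_mul_log_div_pow_le {n : ℕ} (hn : 0 < n) :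
    (1 - 2 * Real.log n / n) ^ n ≤ ((n : ℝ) ^ 2)⁻¹ := by
  refine (Real.one_sub_div_pow_le_exp_neg (Real.two_mul_log_le_self n.cast_nonneg)).trans_eq ?_
  rw [Real.exp_neg, two_mul, Real.exp_add, Real.exp_log (Nat.cast_pos.2 hn), sq]

lemma tendsto_measure_of_measure_compl_le {ι : Type*} {l : Filter ι} {α : ι → Type*}
    [∀ i, MeasurableSpace (α i)] {ν : ∀ i, Measure (α i)} [∀ i, IsProbabilityMeasure (ν i)]
    {s : ∀ i, Set (α i)} {u : ι → ℝ≥0∞} (hu : Tendsto u l (nhds 0))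
    (h : ∀ᶠ i in l, ν i (s i)ᶜ ≤ u i) : Tendsto (fun i => ν i (s i)) l (nhds 1) := by
  have hlow : Tendsto (fun i => 1 - u i) l (nhds 1) := by
    simpa using ENNReal.Tendsto.sub tendsto_const_nhds hu (.inl ENNReal.one_ne_top)
  refine tendsto_of_tendsto_of_tendsto_of_le_of_le' hlow tendsto_const_nhds ?_
    (.of_forall fun i => prob_le_one)
  filter_upwards [h] with i hi
  rw [tsub_le_iff_right]
  calc 1 = ν i univ := measure_univ.symm
    _ ≤ ν i (s i) + ν i (s i)ᶜ := measure_univ_le_add_compl _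
    _ ≤ ν i (s i) + u i := add_le_add le_rfl hi

/-- There is a constant `C₂ > 0` depending only on `a` and `b` such that
for every metric space `M` and every Borel probability measure `μ` on `M` whose support
`Xμ` (the smallest closed set of full measure) is compact and which satisfies the
`(a,b)`-standard assumption, the probability (under `μ^⊗n`) that
`d_H(Xμ, {X₁,…,Xₙ}) ≤ C₂ (log n / n)^{1/b}` tends to `1` as `n → ∞`. -/
theorem stmt_2 (a b : ℝ) (ha : 0 < a) (hb : 0 < b) :
    ∃ C₂ : ℝ, 0 < C₂ ∧
      ∀ (M : Type) [MetricSpace M] [MeasurableSpace M] [BorelSpace M]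
        (μ : Measure M), IsProbabilityMeasure μ →
        ∀ Xμ : Set M, IsClosed Xμ → μ Xμ = 1 →
          (∀ F : Set M, IsClosed F → μ F = 1 → Xμ ⊆ F) → IsCompact Xμ →
          (∀ x ∈ Xμ, ∀ r : ℝ, 0 < r →
            ENNReal.ofReal (min (a * r ^ b) 1) ≤ μ (ball x r)) →
          Filter.Tendsto
            (fun n : ℕ =>
              ((Measure.pi fun _ : Fin n => μ)
                {ω : Fin n → M |
                  hausdorffDist Xμ (Set.range ω)
                    ≤ C₂ * (Real.log n / n) ^ ((1 : ℝ) / b)}).toReal)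
            Filter.atTop (nhds 1) := by
  refine ⟨2 * (2 / a) ^ ((1 : ℝ) / b), by positivity,
    fun M _ _ _ μ _ Xμ hXcl hX1 _ _ hstd => ?_⟩
  have hK : μ Xμᶜ = 0 := (prob_compl_eq_zero_iff hXcl.measurableSet).2 hX1
  have hlim : Tendsto (fun n : ℕ => 2 ^ b / (2 * n * Real.log n)) atTop (nhds 0) :=
    tendsto_const_nhds.div_atTop <|
      (tendsto_natCast_atTop_atTop.const_mul_atTop two_pos).atTop_mul_atTop₀
        (Real.tendsto_log_atTop.comp tendsto_natCast_atTop_atTop)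
  refine (ENNReal.tendsto_toReal ENNReal.one_ne_top).comp
    (tendsto_measure_of_measure_compl_le (ENNReal.ofReal_zero ▸ ENNReal.tendsto_ofReal hlim) ?_)
  filter_upwards [eventually_ge_atTop 2] with n hn
  have hlog : 0 < Real.log n := Real.log_pos (by exact_mod_cast hn)
  have hn0 : (0 : ℝ) < n := by positivity
  set r := (2 / a * (Real.log n / n)) ^ ((1 : ℝ) / b) with hr_def
  have hC : 2 * (2 / a) ^ ((1 : ℝ) / b) * (Real.log n / n) ^ ((1 : ℝ) / b) = 2 * r := by
    rw [hr_def, Real.mul_rpow (by positivity) (by positivity)]; ring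
  have hr : a * r ^ b = 2 * Real.log n / n := by
    rw [hr_def, one_div, Real.rpow_inv_rpow (by positivity) hb.ne']; field_simp
  have hr1 : a * r ^ b ≤ 1 := by
    rw [hr, div_le_one hn0]; exact Real.two_mul_log_le_self hn0.le
  have hbad := StandardAssumption.measure_pi_two_mul_lt_hausdorffDist_range_le hstd ha hb hK
    (by positivity) hr1 (Fin n)
  simp only [compl_ofPred, not_le, hC]
  refine hbad.trans (ENNReal.ofReal_le_ofReal ?_)
  rw [hr, Fintype.card_fin]
  calc 2 ^ b / (2 * Real.log n / n) * (1 - 2 * Real.log n / n) ^ n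
      ≤ 2 ^ b / (2 * Real.log n / n) * ((n : ℝ) ^ 2)⁻¹ :=
        mul_le_mul_of_nonneg_left (one_sub_two_mul_log_div_pow_le (by omega)) (by positivity)
    _ = 2 ^ b / (2 * n * Real.log n) := by field_simp
end

section
/- Let (M,ρ) be a metric space and let μ be a Borel probability measure on M whose support X_μ is compact and which satisfies the (a,b)-standard assumption for some a>0, b>0. Let Ψ : (0,∞) → (0,∞) be the strictly decreasing bijection Ψ(η) = exp(−η)/η and let Ψ^{−1} be its inverse. Let X₁,…,Xₙ be i.i.d. with law μ and X̂ₙ = {X₁,…,Xₙ}. Then for every α ∈ (0,1), ℙ( d_H(X_μ, X̂ₙ) > 2 η_n ) ≤ α, where η_n = [ (1/(n a)) · Ψ^{−1}( α/(n 2^b) ) ]^{1/b}. -/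
/-!
Let `S` be a maximal `η`-separated subset of the support. It is an `η`-net, so if every ball
`B(s, η)`, `s ∈ S`, contains a sample point, the Hausdorff distance is at most `2η`. The balls
`B(s, η/2)` are disjoint and, by the standard assumption, each has mass at least
`a (η/2)^b = t / (n 2^b)`, which bounds `#S`. A fixed ball `B(s, η)` has mass at least
`a η^b = t / n`, so it misses all `n` samples with probability at most `(1 - t/n)^n ≤ e^{-t}`.
The union bound gives `#S e^{-t} ≤ (n 2^b / t) e^{-t} = α`, by the choice `Ψ(t) = α / (n 2^b)`.
When `t > n` every such ball has full mass and the event is null.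
-/

open MeasureTheory Metric Finset
open scoped NNReal ENNReal

section General

variable {X : Type*}

namespace Metric

lemma exists_finset_isCover_isSeparated [PseudoEMetricSpace X] {s : Set X}
    (hs : TotallyBounded s) {ε : ℝ≥0} (hε : ε ≠ 0) :
    ∃ N : Finset X, ↑N ⊆ s ∧ IsCover ε s N ∧ IsSeparated ε (N : Set X) := by
  obtain ⟨C, hCs, hCfin, hC⟩ :=
    exists_finite_isCover_of_totallyBounded (ε := ε / 2) (by simpa using hε) hs
  have hpack : packingNumber ε s ≠ ⊤ := by
    refine ne_top_of_le_ne_top hCfin.encard_lt_top.ne ?_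
    calc packingNumber ε s = packingNumber (2 * (ε / 2)) s := by
          rw [mul_div_cancel₀ _ two_ne_zero]
      _ ≤ externalCoveringNumber (ε / 2) s := packingNumber_two_mul_le_externalCoveringNumber _ _
      _ ≤ coveringNumber (ε / 2) s := externalCoveringNumber_le_coveringNumber _ _
      _ ≤ C.encard := hC.coveringNumber_le_encard hCs
  have hfin : (maximalSeparatedSet ε s).Finite := by
    rw [← Set.encard_ne_top_iff, encard_maximalSeparatedSet hpack]
    exact hpack
  exact ⟨hfin.toFinset, by simpa using maximalSeparatedSet_subset,
    by simpa using isCover_maximalSeparatedSet hpack, by simpa using isSeparated_maximalSeparatedSet⟩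

lemma IsSeparated.pairwiseDisjoint_ball_s16 [PseudoMetricSpace X] {ε : ℝ≥0} {s : Set X}
    (hs : IsSeparated ε s) : s.PairwiseDisjoint fun x => ball x (ε / 2) := by
  intro x hx y hy hxy
  have hεxy : (ε : ℝ) < dist x y := by
    have : (ε : ℝ≥0∞) < edist x y := hs hx hy hxy
    rwa [edist_nndist, ENNReal.coe_lt_coe, ← NNReal.coe_lt_coe, coe_nndist] at this
  exact ball_disjoint_ball (by linarith)

lemma hausdorffDist_le_two_mul_of_isCover [PseudoMetricSpace X] {ε : ℝ≥0} {s t N : Set X}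
    (hN : IsCover ε s N) (hts : t ⊆ s) (hNt : ∀ y ∈ N, ∃ z ∈ t, z ∈ ball y ε) :
    hausdorffDist s t ≤ 2 * ε := by
  refine hausdorffDist_le_of_mem_dist (by positivity) (fun x hx => ?_) fun z hz =>
    ⟨z, hts hz, by rw [dist_self]; positivity⟩
  obtain ⟨y, hyN, hxy⟩ := hN hx
  obtain ⟨z, hzt, hzy⟩ := hNt y hyN
  have hxy : dist x y ≤ ε := dist_le_coe.2 (edist_le_coe.1 hxy)
  refine ⟨z, hzt, ?_⟩
  linarith [dist_triangle x y z, dist_comm z y ▸ mem_ball.1 hzy]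

end Metric

section Sampling

variable {ι : Type*} [Fintype ι] [MeasurableSpace X]

lemma ae_pi_forall_mem (μ : Measure X) [IsProbabilityMeasure μ] {s : Set X}
    (hs : ∀ᵐ x ∂μ, x ∈ s) : ∀ᵐ ω ∂Measure.pi (fun _ : ι => μ), ∀ i, ω i ∈ s :=
  ae_all_iff.2 fun i => (measurePreserving_eval (fun _ : ι => μ) i).quasiMeasurePreserving.ae hs

lemma measure_pi_forall_notMem (μ : Measure X) [SigmaFinite μ] (s : Set X) :
    Measure.pi (fun _ : ι => μ) {ω | ∀ i, ω i ∉ s} = μ sᶜ ^ Fintype.card ι := by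
  have hpi : {ω : ι → X | ∀ i, ω i ∉ s} = Set.univ.pi fun _ => sᶜ := by
    ext ω
    simp
  rw [hpi, Measure.pi_pi, prod_const, card_univ]

lemma measure_pi_hausdorffDist_range_gt_le_sum [PseudoMetricSpace X] (μ : Measure X)
    [IsProbabilityMeasure μ] {s : Set X} (hs : ∀ᵐ x ∂μ, x ∈ s) {ε : ℝ≥0} {N : Finset X}
    (hN : IsCover ε s N) :
    Measure.pi (fun _ : ι => μ) {ω | 2 * ε < hausdorffDist s (Set.range ω)} ≤
      ∑ y ∈ N, μ (ball y ε)ᶜ ^ Fintype.card ι := by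
  set P := Measure.pi fun _ : ι => μ
  calc P {ω | 2 * ε < hausdorffDist s (Set.range ω)}
      ≤ P (⋃ y ∈ N, {ω | ∀ i, ω i ∉ ball y ε}) := by
        refine measure_mono_ae <| (ae_pi_forall_mem μ hs).mono fun ω hωs hfar => ?_
        change 2 * (ε : ℝ) < hausdorffDist s (Set.range ω) at hfar
        change ω ∈ ⋃ y ∈ N, {ω : ι → X | ∀ i, ω i ∉ ball y ε}
        by_contra hhit
        simp only [Set.mem_iUnion₂, Set.mem_ofPred_eq, not_exists, not_forall, not_not] at hhit
        refine (not_le.2 hfar) (hausdorffDist_le_two_mul_of_isCover hN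
          (Set.range_subset_iff.2 hωs) fun y hy => ?_)
        obtain ⟨i, hi⟩ := hhit y hy
        exact ⟨ω i, Set.mem_range_self i, hi⟩
    _ ≤ ∑ y ∈ N, P {ω | ∀ i, ω i ∉ ball y ε} := measure_biUnion_finset_le _ _
    _ = ∑ y ∈ N, μ (ball y ε)ᶜ ^ Fintype.card ι := by
        simp only [P, measure_pi_forall_notMem]

end Sampling

lemma card_mul_le_one_of_pairwiseDisjoint_ball [PseudoMetricSpace X] [MeasurableSpace X]
    [OpensMeasurableSpace X] (μ : Measure X) [IsProbabilityMeasure μ] {N : Finset X} {r : ℝ}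
    (hN : (N : Set X).PairwiseDisjoint fun x => ball x r) {p : ℝ≥0∞}
    (hp : ∀ x ∈ N, p ≤ μ (ball x r)) : #N * p ≤ 1 :=
  calc #N * p = ∑ x ∈ N, p := by rw [sum_const, nsmul_eq_mul]
    _ ≤ ∑ x ∈ N, μ (ball x r) := sum_le_sum hp
    _ = μ (⋃ x ∈ N, ball x r) := (measure_biUnion_finset hN fun _ _ => measurableSet_ball).symm
    _ ≤ 1 := prob_le_one

lemma measure_compl_pow_le_exp_neg [MeasurableSpace X] {μ : Measure X} [IsProbabilityMeasure μ]
    {s : Set X} (hs : MeasurableSet s) {n : ℕ} {t : ℝ} (ht₀ : 0 ≤ t) (htn : t ≤ n)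
    (hμs : ENNReal.ofReal (t / n) ≤ μ s) : μ sᶜ ^ n ≤ ENNReal.ofReal (Real.exp (-t)) := by
  have htn' : t / n ≤ 1 := div_le_one_of_le₀ htn n.cast_nonneg
  calc μ sᶜ ^ n = (1 - μ s) ^ n := by rw [prob_compl_eq_one_sub hs]
    _ ≤ (1 - ENNReal.ofReal (t / n)) ^ n := by gcongr
    _ = ENNReal.ofReal ((1 - t / n) ^ n) := by
        rw [ENNReal.ofReal_pow (by linarith), ENNReal.ofReal_sub _ (by positivity),
          ENNReal.ofReal_one]
    _ ≤ ENNReal.ofReal (Real.exp (-t)) :=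
        ENNReal.ofReal_le_ofReal (Real.one_sub_div_pow_le_exp_neg htn)

lemma ofReal_min_div_rpow_le_measure_ball [PseudoMetricSpace X] [MeasurableSpace X]
    {μ : Measure X} {s : Set X} {a b : ℝ} (ha : 0 < a) (hb : b ≠ 0)
    (hstd : ∀ x ∈ s, ∀ r : ℝ, 0 < r → ENNReal.ofReal (min (a * r ^ b) 1) ≤ μ (ball x r))
    {c k : ℝ} (hc : 0 < c) (hk : 0 < k) {x : X} (hx : x ∈ s) :
    ENNReal.ofReal (min (c / k ^ b) 1) ≤ μ (ball x ((c / a) ^ (1 / b) / k)) := by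
  convert hstd x hx ((c / a) ^ (1 / b) / k) (by positivity) using 3
  rw [Real.div_rpow (by positivity) hk.le, one_div, Real.rpow_inv_rpow (by positivity) hb,
    mul_div_assoc', mul_div_cancel₀ _ ha.ne']

end General

theorem stmt_16_general {M : Type*} [MetricSpace M] [MeasurableSpace M] [BorelSpace M]
    (μ : Measure M) [IsProbabilityMeasure μ]
    (Xμ : Set M) (hXclosed : IsClosed Xμ) (hXfull : μ Xμ = 1)
    (hXcpt : IsCompact Xμ)
    (a b : ℝ) (ha : 0 < a) (hb : 0 < b)
    (hstd : ∀ x ∈ Xμ, ∀ r : ℝ, 0 < r →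
      ENNReal.ofReal (min (a * r ^ b) 1) ≤ μ (ball x r))
    (n : ℕ) (hn : 1 ≤ n) (α : ℝ)
    (t : ℝ) (ht : 0 < t) (hΨ : Real.exp (-t) / t = α / (n * 2 ^ b)) :
    (Measure.pi fun _ : Fin n => μ)
        {ω : Fin n → M |
          2 * (t / (n * a)) ^ ((1 : ℝ) / b) < hausdorffDist Xμ (Set.range ω)}
      ≤ ENNReal.ofReal α := by
  have hn₀ : (0 : ℝ) < n := by exact_mod_cast hn
  rw [← div_div]
  set η : ℝ≥0 := ⟨(t / n / a) ^ ((1 : ℝ) / b), by positivity⟩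
  have hball (k : ℝ) (hk : 0 < k) (y : M) (hy : y ∈ Xμ) :
      ENNReal.ofReal (min (t / n / k ^ b) 1) ≤ μ (ball y (η / k)) :=
    ofReal_min_div_rpow_le_measure_ball ha hb.ne' hstd (by positivity) hk hy
  have hη : (0 : ℝ) < η := Real.rpow_pos_of_pos (by positivity) _
  obtain ⟨S, hSX, hS_cover, hS_sep⟩ :=
    exists_finset_isCover_isSeparated hXcpt.totallyBounded (ε := η) (by exact_mod_cast hη.ne')
  have hXae : ∀ᵐ x ∂μ, x ∈ Xμ :=
    (ae_mem_iff_measure_eq hXclosed.measurableSet.nullMeasurableSet).2 (by rw [hXfull, measure_univ])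
  refine (measure_pi_hausdorffDist_range_gt_le_sum (ι := Fin n) μ hXae hS_cover).trans ?_
  rw [Fintype.card_fin]
  rcases le_or_gt t n with htn | hnt
  · have hp₁ : t / n ≤ 1 := div_le_one_of_le₀ htn hn₀.le
    have hq₁ : t / n / 2 ^ b ≤ 1 :=
      div_le_one_of_le₀ (hp₁.trans (Real.one_le_rpow one_le_two hb.le)) (by positivity)
    have hexp : Real.exp (-t) = t / n / 2 ^ b * α := by
      rw [div_eq_iff ht.ne'] at hΨ
      rw [hΨ]
      ring
    calc ∑ y ∈ S, μ (ball y η)ᶜ ^ n ≤ ∑ y ∈ S, ENNReal.ofReal (Real.exp (-t)) :=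
          sum_le_sum fun y hy => measure_compl_pow_le_exp_neg measurableSet_ball ht.le htn <| by
            simpa [min_eq_left hp₁] using hball 1 one_pos y (hSX hy)
      _ = #S * ENNReal.ofReal (t / n / 2 ^ b) * ENNReal.ofReal α := by
          rw [sum_const, nsmul_eq_mul, hexp, ENNReal.ofReal_mul (by positivity), mul_assoc]
      _ ≤ ENNReal.ofReal α := mul_le_of_le_one_left' <|
          card_mul_le_one_of_pairwiseDisjoint_ball μ hS_sep.pairwiseDisjoint_ball_s16 fun y hy => by
            simpa [min_eq_left hq₁] using hball 2 two_pos y (hSX hy)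
  · refine (sum_eq_zero fun y hy => ?_).trans_le zero_le
    have hfull : μ (ball y η) = 1 := le_antisymm prob_le_one <| by
      simpa [min_eq_right ((one_le_div hn₀).2 hnt.le)] using hball 1 one_pos y (hSX hy)
    rw [(prob_compl_eq_zero_iff measurableSet_ball).2 hfull, zero_pow (by omega)]

/-- Let `μ` be a Borel probability measure on a metric space `M` whose
support `Xμ` (the smallest closed set of full measure) is compact and which satisfies
the `(a,b)`-standard assumption. Let `Ψ(η) = exp(-η)/η` on `(0,∞)` and let
`t = Ψ⁻¹(α/(n 2ᵇ))` (i.e. `t > 0` with `exp(-t)/t = α/(n 2ᵇ)`). Then for `α ∈ (0,1)`,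
with `ηₙ = (t/(n a))^{1/b}`, one has `ℙ(d_H(Xμ, X̂ₙ) > 2 ηₙ) ≤ α`, where
`X̂ₙ = {X₁,…,Xₙ}` for `X₁,…,Xₙ` i.i.d. of law `μ` (the product measure on
`Fin n → M`). -/
theorem stmt_16 {M : Type*} [MetricSpace M] [MeasurableSpace M] [BorelSpace M]
    (μ : Measure M) [IsProbabilityMeasure μ]
    (Xμ : Set M) (hXclosed : IsClosed Xμ) (hXfull : μ Xμ = 1)
    (hXmin : ∀ F : Set M, IsClosed F → μ F = 1 → Xμ ⊆ F)
    (hXcpt : IsCompact Xμ)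
    (a b : ℝ) (ha : 0 < a) (hb : 0 < b)
    (hstd : ∀ x ∈ Xμ, ∀ r : ℝ, 0 < r →
      ENNReal.ofReal (min (a * r ^ b) 1) ≤ μ (ball x r))
    (n : ℕ) (hn : 1 ≤ n) (α : ℝ) (hα : 0 < α) (hα1 : α < 1)
    (t : ℝ) (ht : 0 < t) (hΨ : Real.exp (-t) / t = α / (n * 2 ^ b)) :
    (Measure.pi fun _ : Fin n => μ)
        {ω : Fin n → M |
          2 * (t / (n * a)) ^ ((1 : ℝ) / b) < hausdorffDist Xμ (Set.range ω)}
      ≤ ENNReal.ofReal α :=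
  stmt_16_general μ Xμ hXclosed hXfull hXcpt a b ha hb hstd n hn α t ht hΨ
end
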